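/- With the Paillier setup, Paillier encryption is additively homomorphic: for natural numbers m₁, m₂ and units r₁, r₂ of ZMod (N²), the ciphertexts c₁ = Γ^{m₁}·r₁^N and c₂ = Γ^{m₂}·r₂^N satisfy D(c₁·c₂) = image of m₁ + m₂ in ZMod N. -/

import Mathlib

/-!
Write `N = pq` and `λ = lcm(p-1, q-1)`. The Carmichael exponent of `(ZMod N)ˣ` divides `λ` and
that of `(ZMod N²)ˣ` divides `Nλ`. Hence the factors `r^(Nλ)` of `(c₁c₂)^λ` are `1`, leaving
`(Γ^λ)^(m₁+m₂)`, and `Γ^λ ≡ 1 (mod N)`, i.e. `Γ^λ = 1 + aN` in `ZMod N²`. Since `N² = 0` there,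
`(1 + aN)^k = 1 + kaN`, so `L((Γ^λ)^k) = k · L(Γ^λ)` and `D(c₁c₂) = (m₁+m₂) · L(Γ^λ) · μ = m₁ + m₂`.
-/

/-- The Paillier `L` function: for a unit `w` of `ZMod (N^2)`,
`L(w) = (w.val - 1) / N`, viewed as an element of `ZMod N`. -/
def paillierL (N : ℕ) (w : (ZMod (N ^ 2))ˣ) : ZMod N :=
  ((((w : ZMod (N ^ 2)).val - 1) / N : ℕ) : ZMod N)

/-- Paillier decryption: `D(c) = L(c^λ) · μ`. -/
def paillierD (N lam : ℕ) (μ : ZMod N) (c : (ZMod (N ^ 2))ˣ) : ZMod N :=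
  paillierL N (c ^ lam) * μ

open ArithmeticFunction

theorem ZMod.units_pow_eq_one_of_carmichael_dvd {n k : ℕ} (h : carmichael n ∣ k)
    (u : (ZMod n)ˣ) : u ^ k = 1 := by
  obtain ⟨t, rfl⟩ := h
  rw [pow_mul, pow_carmichael, one_pow]

theorem carmichael_mul_dvd_lcm_totient {a b : ℕ} (h : a.Coprime b) :
    carmichael (a * b) ∣ Nat.lcm a.totient b.totient :=
  carmichael_mul h ▸ lcm_dvd_lcm (carmichael_dvd_totient a) (carmichael_dvd_totient b)

theorem carmichael_mul_dvd_lcm_sub_one {p q : ℕ} (hp : p.Prime) (hq : q.Prime) (hpq : p ≠ q) :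
    carmichael (p * q) ∣ Nat.lcm (p - 1) (q - 1) := by
  have h := carmichael_mul_dvd_lcm_totient ((Nat.coprime_primes hp hq).mpr hpq)
  rwa [Nat.totient_prime hp, Nat.totient_prime hq] at h

theorem carmichael_mul_sq_dvd_mul_lcm_sub_one {p q : ℕ} (hp : p.Prime) (hq : q.Prime)
    (hpq : p ≠ q) : carmichael ((p * q) ^ 2) ∣ p * q * Nat.lcm (p - 1) (q - 1) := by
  have h := carmichael_mul_dvd_lcm_totient (((Nat.coprime_primes hp hq).mpr hpq).pow 2 2)
  rw [Nat.totient_prime_pow_succ hp, Nat.totient_prime_pow_succ hq, pow_one, pow_one] at h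
  rw [mul_pow]
  refine h.trans (Nat.lcm_dvd ?_ ?_)
  · rw [mul_assoc]
    exact mul_dvd_mul_left p ((Nat.dvd_lcm_left _ _).mul_left q)
  · rw [mul_comm p q, mul_assoc]
    exact mul_dvd_mul_left q ((Nat.dvd_lcm_right _ _).mul_left p)

theorem one_add_pow_of_sq_eq_zero {R : Type*} [CommRing R] {x : R} (hx : x ^ 2 = 0) (k : ℕ) :
    (1 + x) ^ k = 1 + k * x := by
  induction k with
  | zero => simp
  | succ k ih =>
    rw [pow_succ, ih]
    push_cast
    linear_combination (k : R) * hx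

theorem paillierL_eq_of_coe_eq_one_add_mul {N : ℕ} (hN : 1 < N) {w : (ZMod (N ^ 2))ˣ} {a : ℕ}
    (hw : (w : ZMod (N ^ 2)) = 1 + a * N) : paillierL N w = a := by
  have hlt : 1 + a % N * N < N ^ 2 := by
    have h := Nat.mul_le_mul_right N (Nat.mod_lt a (by omega : 0 < N))
    rw [Nat.succ_mul] at h
    nlinarith
  have hw' : (w : ZMod (N ^ 2)) = ((1 + a % N * N : ℕ) : ZMod (N ^ 2)) := by
    have hN2 : ((N ^ 2 : ℕ) : ZMod (N ^ 2)) = 0 := ZMod.natCast_self _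
    rw [hw]
    conv_lhs => rw [← Nat.mod_add_div a N]
    push_cast at hN2 ⊢
    linear_combination ((a / N : ℕ) : ZMod (N ^ 2)) * hN2
  unfold paillierL
  rw [hw', ZMod.val_natCast_of_lt hlt, Nat.add_sub_cancel_left, Nat.mul_div_cancel _ (by omega),
    ZMod.natCast_mod]

theorem exists_coe_eq_one_add_mul_of_unitsMap_eq_one {N : ℕ} (hN : 1 < N) {w : (ZMod (N ^ 2))ˣ}
    (hw : ZMod.unitsMap (dvd_pow_self N two_ne_zero) w = 1) :
    ∃ a : ℕ, (w : ZMod (N ^ 2)) = 1 + a * N := by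
  have : Fact (1 < N) := ⟨hN⟩
  have hv : (w : ZMod (N ^ 2)).val % N = 1 := by
    have := congrArg Units.val hw
    rw [ZMod.unitsMap_val, ZMod.cast_eq_val, Units.val_one] at this
    rw [← ZMod.val_natCast, this, ZMod.val_one]
  obtain ⟨a, ha⟩ : ∃ a, (w : ZMod (N ^ 2)).val = 1 + a * N :=
    ⟨(w : ZMod (N ^ 2)).val / N, by have := Nat.mod_add_div (w : ZMod (N ^ 2)).val N; lia⟩
  refine ⟨a, ?_⟩
  rw [← ZMod.natCast_zmod_val (w : ZMod (N ^ 2)), ha]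
  push_cast
  ring

theorem paillierL_pow {N : ℕ} (hN : 1 < N) {w : (ZMod (N ^ 2))ˣ}
    (hw : ZMod.unitsMap (dvd_pow_self N two_ne_zero) w = 1) (k : ℕ) :
    paillierL N (w ^ k) = k * paillierL N w := by
  obtain ⟨a, ha⟩ := exists_coe_eq_one_add_mul_of_unitsMap_eq_one hN hw
  have hNsq : ((N : ZMod (N ^ 2)) ^ 2) = 0 := by exact_mod_cast ZMod.natCast_self (N ^ 2)
  have hwk : ((w ^ k : (ZMod (N ^ 2))ˣ) : ZMod (N ^ 2)) = 1 + (k * a : ℕ) * N := by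
    rw [Units.val_pow_eq_pow_val, ha, one_add_pow_of_sq_eq_zero (by rw [mul_pow, hNsq, mul_zero])]
    push_cast
    ring
  rw [paillierL_eq_of_coe_eq_one_add_mul hN hwk, paillierL_eq_of_coe_eq_one_add_mul hN ha,
    Nat.cast_mul]

theorem paillier_add_homomorphic_general
    (p q : ℕ) (hp : p.Prime) (hq : q.Prime) (hpq : p ≠ q)
    (N : ℕ) (hN : N = p * q)
    (lam : ℕ) (hlam : lam = Nat.lcm (p - 1) (q - 1))
    (Γ : (ZMod (N ^ 2))ˣ) (μ : ZMod N)
    (hμ : paillierL N (Γ ^ lam) * μ = 1)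
    (m₁ m₂ : ℕ) (r₁ r₂ : (ZMod (N ^ 2))ˣ) :
    paillierD N lam μ ((Γ ^ m₁ * r₁ ^ N) * (Γ ^ m₂ * r₂ ^ N)) = ((m₁ + m₂ : ℕ) : ZMod N) := by
  have hN1 : 1 < N := hN ▸ Nat.one_lt_mul_iff.mpr ⟨hp.pos, hq.pos, Or.inl hp.one_lt⟩
  have hΓ : ZMod.unitsMap (dvd_pow_self N two_ne_zero) (Γ ^ lam) = 1 := by
    rw [map_pow]
    refine ZMod.units_pow_eq_one_of_carmichael_dvd ?_ _
    rw [hN, hlam]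
    exact carmichael_mul_dvd_lcm_sub_one hp hq hpq
  have hr (r : (ZMod (N ^ 2))ˣ) : (r ^ N) ^ lam = 1 := by
    rw [← pow_mul]
    refine ZMod.units_pow_eq_one_of_carmichael_dvd ?_ _
    rw [hN, hlam]
    exact carmichael_mul_sq_dvd_mul_lcm_sub_one hp hq hpq
  rw [paillierD, mul_mul_mul_comm, ← pow_add, mul_pow, mul_pow, hr, hr, mul_one, mul_one,
    pow_right_comm, paillierL_pow hN1 hΓ, mul_assoc, hμ, mul_one]

theorem paillier_add_homomorphic
    (p q : ℕ) (hp : p.Prime) (hq : q.Prime) (hpq : p ≠ q)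
    (N : ℕ) (hN : N = p * q)
    (hco : Nat.Coprime N ((p - 1) * (q - 1)))
    (lam : ℕ) (hlam : lam = Nat.lcm (p - 1) (q - 1))
    (Γ : (ZMod (N ^ 2))ˣ) (μ : ZMod N)
    (hμ : paillierL N (Γ ^ lam) * μ = 1)
    (m₁ m₂ : ℕ) (r₁ r₂ : (ZMod (N ^ 2))ˣ) :
    paillierD N lam μ ((Γ ^ m₁ * r₁ ^ N) * (Γ ^ m₂ * r₂ ^ N)) = ((m₁ + m₂ : ℕ) : ZMod N) :=
  paillier_add_homomorphic_general p q hp hq hpq N hN lam hlam Γ μ hμ m₁ m₂ r₁ r₂
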